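/- arXiv:math/0502152 — 2 statements merged into one kernel-verified Lean document; each statement's English description precedes it below -/
import Mathlib

section
/- Within the group G of maps (z', z_n) ↦ (Uz' + a, z_n + 2⟨Uz', a⟩ + |a|² + iα) (U ∈ U_{n-1}, a ∈ ℂ^{n-1}, α ∈ ℝ), the centralizer of the subgroup with U ∈ SU_{n-1} consists exactly of the maps (z', z_n) ↦ (z', z_n + iα), α ∈ ℝ. Assume n ≥ 3. -/
/-!
Commuting with the Heisenberg translations `heisAut _ 1 b 0` (which have `det 1 = 1`) already
forces the form: evaluating both composites at the origin gives `U b = b` from the first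
coordinate and `⟪a, b⟫ = ⟪b, a⟫`, i.e. `⟪a, b⟫ ∈ ℝ`, from the second, for every `b`; taking
`b = i a` yields `a = 0`. Conversely, vertical shifts `(z', z_n) ↦ (z', z_n + c)` commute with
every element of the group.
-/

/-- The map `(z',z_n) ↦ (Uz'+a, z_n + 2⟨Uz',a⟩ + |a|² + iα)` (element of
`U_{n-1} ⋉ N` acting on `ℂ^{n-1} × ℂ`). -/
noncomputable def heisAut (m : ℕ) (U : Matrix (Fin m) (Fin m) ℂ)
    (a : EuclideanSpace ℂ (Fin m)) (α : ℝ) :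
    EuclideanSpace ℂ (Fin m) × ℂ → EuclideanSpace ℂ (Fin m) × ℂ :=
  fun p =>
    ((WithLp.toLp 2 (fun i => U.mulVec p.1 i + a i) : EuclideanSpace ℂ (Fin m)),
      p.2 + 2 * (inner ℂ a (WithLp.toLp 2 (fun i => U.mulVec p.1 i) :
          EuclideanSpace ℂ (Fin m)) : ℂ) + (‖a‖ : ℂ) ^ 2 + Complex.I * α)

open Complex Matrix

open scoped InnerProductSpace

theorem eq_zero_of_forall_inner_eq_inner_swap {E : Type*} [NormedAddCommGroup E]
    [InnerProductSpace ℂ E] {a : E} (h : ∀ b, ⟪a, b⟫_ℂ = ⟪b, a⟫_ℂ) : a = 0 := by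
  have hI := h (I • a)
  rw [inner_smul_right, inner_smul_left, conj_I] at hI
  have : (2 * I) * ⟪a, a⟫_ℂ = 0 := by linear_combination hI
  simpa [I_ne_zero] using this

section

variable {m : ℕ} (U : Matrix (Fin m) (Fin m) ℂ) (a : EuclideanSpace ℂ (Fin m)) (α : ℝ)

theorem heisAut_apply (p : EuclideanSpace ℂ (Fin m) × ℂ) :
    heisAut m U a α p = (WithLp.toLp 2 (U *ᵥ p.1.ofLp) + a,
      p.2 + 2 * ⟪a, WithLp.toLp 2 (U *ᵥ p.1.ofLp)⟫_ℂ + (‖a‖ : ℂ) ^ 2 + I * α) :=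
  rfl

theorem heisAut_comp_vertical_shift (c : ℂ) :
    heisAut m U a α ∘ (fun p => (p.1, p.2 + c)) = (fun p => (p.1, p.2 + c)) ∘ heisAut m U a α := by
  funext p
  simp only [Function.comp_apply, heisAut_apply, Prod.mk.injEq, true_and]
  ring

theorem mulVec_eq_self_and_inner_comm_of_comm_translation (b : EuclideanSpace ℂ (Fin m))
    (h : heisAut m U a α ∘ heisAut m 1 b 0 = heisAut m 1 b 0 ∘ heisAut m U a α) :
    WithLp.toLp 2 (U *ᵥ b.ofLp) = b ∧ ⟪a, b⟫_ℂ = ⟪b, a⟫_ℂ := by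
  have h0 := congrFun h 0
  simp only [Function.comp_apply, heisAut_apply, Prod.fst_zero, Prod.snd_zero, mulVec_zero,
    one_mulVec, WithLp.toLp_zero, WithLp.ofLp_zero, WithLp.toLp_ofLp, zero_add, inner_zero_right,
    mul_zero, Prod.mk.injEq, ofReal_zero] at h0
  obtain ⟨hfst, hsnd⟩ := h0
  have hUb : WithLp.toLp 2 (U *ᵥ b.ofLp) = b := by rwa [add_comm a, add_left_inj] at hfst
  rw [hUb] at hsnd
  exact ⟨hUb, by linear_combination hsnd / 2⟩

end

theorem heisAut_eq_vertical_shift_of_comm_translations {m : ℕ} {U : Matrix (Fin m) (Fin m) ℂ}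
    {a : EuclideanSpace ℂ (Fin m)} {α : ℝ}
    (h : ∀ b, heisAut m U a α ∘ heisAut m 1 b 0 = heisAut m 1 b 0 ∘ heisAut m U a α) :
    heisAut m U a α = fun p => (p.1, p.2 + I * α) := by
  have hU b := (mulVec_eq_self_and_inner_comm_of_comm_translation U a α b (h b)).1
  have ha : a = 0 := eq_zero_of_forall_inner_eq_inner_swap fun b =>
    (mulVec_eq_self_and_inner_comm_of_comm_translation U a α b (h b)).2
  funext p
  simp [heisAut_apply, hU, ha]

theorem stmt_9_general (n : ℕ)
    (U : Matrix (Fin (n - 1)) (Fin (n - 1)) ℂ)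
    (a : EuclideanSpace ℂ (Fin (n - 1))) (α : ℝ) :
    (∀ V ∈ Matrix.unitaryGroup (Fin (n - 1)) ℂ, V.det = 1 →
        ∀ (b : EuclideanSpace ℂ (Fin (n - 1))) (β : ℝ),
          heisAut (n - 1) U a α ∘ heisAut (n - 1) V b β
            = heisAut (n - 1) V b β ∘ heisAut (n - 1) U a α) ↔
      ∃ α' : ℝ, heisAut (n - 1) U a α
        = fun p : EuclideanSpace ℂ (Fin (n - 1)) × ℂ =>
            (p.1, p.2 + Complex.I * α') := by
  constructor
  · intro h
    exact ⟨α, heisAut_eq_vertical_shift_of_comm_translations fun b =>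
      h 1 (one_mem _) det_one b 0⟩
  · rintro ⟨α', hUa⟩ V _ _ b β
    rw [hUa]
    exact (heisAut_comp_vertical_shift V b β _).symm

/-- For `n ≥ 3`, within the group `G` of maps
`(z',z_n) ↦ (Uz'+a, z_n + 2⟨Uz',a⟩ + |a|² + iα)` with `U ∈ U_{n-1}`, an element
centralizes the subgroup `SU_{n-1} ⋉ N` (those with `det U = 1`) if and only if
it is of the form `(z',z_n) ↦ (z', z_n + iα')` for some `α' ∈ ℝ`. -/
theorem stmt_9 (n : ℕ) (hn : 3 ≤ n)
    (U : Matrix (Fin (n - 1)) (Fin (n - 1)) ℂ)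
    (hU : U ∈ Matrix.unitaryGroup (Fin (n - 1)) ℂ)
    (a : EuclideanSpace ℂ (Fin (n - 1))) (α : ℝ) :
    (∀ V ∈ Matrix.unitaryGroup (Fin (n - 1)) ℂ, V.det = 1 →
        ∀ (b : EuclideanSpace ℂ (Fin (n - 1))) (β : ℝ),
          heisAut (n - 1) U a α ∘ heisAut (n - 1) V b β
            = heisAut (n - 1) V b β ∘ heisAut (n - 1) U a α) ↔
      ∃ α' : ℝ, heisAut (n - 1) U a α
        = fun p : EuclideanSpace ℂ (Fin (n - 1)) × ℂ =>
            (p.1, p.2 + Complex.I * α') :=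
  stmt_9_general n U a α
end

section
/- Let k ∈ ℝ \ {0} and let f : ℂ → ℂ be a continuous function mapping the unit circle to itself such that f is a homeomorphism of the unit circle satisfying e^{ic} f(u) = f(e^{ikc} u) for all u on the unit circle and all c ∈ ℝ. Then for all real t, f(e^{it}) = f(1)·e^{it/k}, and in particular 1/k is an integer, equal to ±1. -/
/-- Let `k ≠ 0` and let `f : ℂ → ℂ` be a continuous map restricting to a
homeomorphism of the unit circle and satisfying `e^{ic} f(u) = f(e^{ikc} u)`
for all `u` on the circle and `c ∈ ℝ`. Then `f(e^{it}) = f(1)·e^{it/k}` for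
all real `t`, and `k = ±1`. -/
theorem stmt_15 (k : ℝ) (hk : k ≠ 0) (f : ℂ → ℂ) (hcont : Continuous f)
    (hmap : ∀ u : ℂ, ‖u‖ = 1 → ‖f u‖ = 1)
    (hbij : Set.BijOn f {u : ℂ | ‖u‖ = 1} {u : ℂ | ‖u‖ = 1})
    (heq : ∀ u : ℂ, ‖u‖ = 1 → ∀ c : ℝ,
      Complex.exp (Complex.I * c) * f u = f (Complex.exp (Complex.I * (k * c)) * u)) :
    (∀ t : ℝ, f (Complex.exp (Complex.I * t))
        = f 1 * Complex.exp (Complex.I * (t / k))) ∧ (k = 1 ∨ k = -1) := by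
  have habs1 : ‖(1:ℂ)‖ = 1 := by simp
  have hkC : (k : ℂ) ≠ 0 := by exact_mod_cast hk
  have hA : ∀ t : ℝ, f (Complex.exp (Complex.I * t))
      = f 1 * Complex.exp (Complex.I * (t / k)) := by
    intro t
    have h := heq 1 habs1 (t / k)
    rw [mul_one] at h
    push_cast at h
    rw [show (k:ℂ) * ((t:ℂ)/(k:ℂ)) = (t:ℂ) by field_simp] at h
    linear_combination -h
  refine ⟨fun t => by simpa using hA t, ?_⟩
  have hf1 : f 1 ≠ 0 := by
    intro h0
    have := hmap 1 habs1
    rw [h0] at this; simp at this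
  have hπ := Real.pi_ne_zero
  have h2π := hA (2 * Real.pi)
  have hexp2π : Complex.exp (Complex.I * ((2 * Real.pi : ℝ) : ℂ)) = 1 := by
    push_cast
    rw [show Complex.I * (2 * (Real.pi : ℂ)) = 2 * Real.pi * Complex.I by ring]
    exact Complex.exp_two_pi_mul_I
  rw [hexp2π] at h2π
  have hE' : f 1 * 1 = f 1 * Complex.exp (Complex.I * (((2 * Real.pi : ℝ):ℂ) / (k:ℂ))) := by
    rw [mul_one]; exact h2π
  have hE : Complex.exp (Complex.I * ((2 * Real.pi / k : ℝ) : ℂ)) = 1 := by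
    rw [Complex.ofReal_div]
    exact (mul_left_cancel₀ hf1 hE').symm
  obtain ⟨n, hn⟩ := Complex.exp_eq_one_iff.mp hE
  have hn' : (2 * Real.pi / k : ℝ) = n * (2 * Real.pi) := by
    have := congrArg Complex.im hn
    simpa using this
  field_simp at hn'
  have hkn : (n:ℝ) * k = 1 :=
    mul_left_cancel₀ (show (2*Real.pi) ≠ 0 by positivity)
      (by rw [mul_one]; linear_combination (-(2*Real.pi)) * hn')
  have hnne : (n : ℝ) ≠ 0 := by
    intro h0; rw [h0, zero_mul] at hkn; norm_num at hkn
  set t0 : ℝ := 2 * Real.pi / n with ht0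
  have hB := hA t0
  have ht0k : t0 / k = 2 * Real.pi := by
    rw [ht0, div_div, hkn, div_one]
  rw [show ((t0:ℝ):ℂ) / (k:ℂ) = ((t0/k : ℝ):ℂ) by push_cast; ring, ht0k, hexp2π, mul_one] at hB
  have hmem1 : ‖Complex.exp (Complex.I * t0)‖ = 1 := by
    simp [Complex.norm_exp]
  have hinj : Complex.exp (Complex.I * t0) = 1 := hbij.injOn hmem1 habs1 hB
  obtain ⟨m, hm⟩ := Complex.exp_eq_one_iff.mp hinj
  have hm' : t0 = m * (2 * Real.pi) := by
    have := congrArg Complex.im hm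
    simpa using this
  rw [ht0, div_eq_iff hnne] at hm'
  have hnm : (n:ℝ) * m = 1 :=
    mul_left_cancel₀ (show (2*Real.pi) ≠ 0 by positivity)
      (by rw [mul_one]; linear_combination -hm')
  have hnmZ : n * m = 1 := by exact_mod_cast hnm
  rcases Int.mul_eq_one_iff_eq_one_or_neg_one.mp hnmZ with ⟨h1, _⟩ | ⟨h1, _⟩ <;>
    rw [h1] at hkn <;> push_cast at hkn
  · left; linarith
  · right; linarith
end
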